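/- Davie's lemma: let ω be a Brjuno number with λ = e^{2πiω} and convergent denominators (q_k), and define K(n) = n log 2 + ∑_{k=0}^{k(n)} g_k(n) log(2q_{k+1}) where k(n) satisfies q_{k(n)} ≤ n < q_{k(n)+1} and g_k are the nonnegative functions of Davie satisfying g_k(0)=0, g_k(n) ≤ (1+η_k)n/q_k with η_k = q_k/max(q_k, q_{k+1}/4), superadditivity g_k(n_1)+g_k(n_2) ≤ g_k(n_1+n_2), and g_k(n) ≥ g_k(n−1)+1 whenever n ∈ A_k = {m ≥ 0 : ‖mω‖ ≤ 1/(8q_k)}, n > 0. Then: (1) there is a universal constant γ_3 > 0 with K(n) ≤ n(∑_{k=0}^{k(n)} (log q_{k+1})/q_k + γ_3); (2) K(n_1) + K(n_2) ≤ K(n_1+n_2); (3) −log|λ^n − 1| ≤ K(n) − K(n−1). -/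

import Mathlib

open Finset Filter


/-- The iterated fractional parts of the Gauss continued fraction algorithm:
`gaussIter ω n = ω_n`. -/
noncomputable def gaussIter (ω : ℝ) : ℕ → ℝ
  | 0 => Int.fract ω
  | n + 1 => Int.fract (gaussIter ω n)⁻¹

/-- The partial quotients of the Gauss continued fraction algorithm:
`cfA ω 0 = a₀ = ⌊ω⌋`, `cfA ω (n+1) = a_{n+1} = ⌊1/ω_n⌋`. -/
noncomputable def cfA (ω : ℝ) : ℕ → ℤ
  | 0 => ⌊ω⌋
  | n + 1 => ⌊(gaussIter ω n)⁻¹⌋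

/-- Denominators of the convergents: `q₋₂ = 1`, `q₋₁ = 0`, `q_n = a_n q_{n-1} + q_{n-2}`
(so `q₀ = 1`, `q₁ = a₁`). They are positive integers. -/
noncomputable def qden (ω : ℝ) : ℕ → ℕ
  | 0 => 1
  | 1 => (cfA ω 1).toNat
  | n + 2 => (cfA ω (n + 2)).toNat * qden ω (n + 1) + qden ω n

/-- Numerators of the convergents: `p₋₂ = 0`, `p₋₁ = 1`, `p_n = a_n p_{n-1} + p_{n-2}`
(so `p₀ = a₀`, `p₁ = a₁ a₀ + 1`). -/
noncomputable def pnum (ω : ℝ) : ℕ → ℤ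
  | 0 => cfA ω 0
  | 1 => cfA ω 1 * cfA ω 0 + 1
  | n + 2 => cfA ω (n + 2) * pnum ω (n + 1) + pnum ω n

/-- The denominators viewed as real numbers. -/
noncomputable def qr (ω : ℝ) (n : ℕ) : ℝ := (qden ω n : ℝ)

/-!
Write `β_n = q_n ω - p_n`. One has `β_n = (-1)^n ω_0 ⋯ ω_n` and
`p_{n+1} q_n - p_n q_{n+1} = (-1)^n`, hence `q_{n+1} |β_n| + q_n |β_{n+1}| = 1` and
`|β_n| ≥ 1/(2 q_{n+1})`. Expanding `(n, m)` in the unimodular basis `(q_t, p_t), (q_{t+1}, p_{t+1})`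
gives `|nω - m| ≥ |β_t| ≥ 1/(2 q_{t+1})` for `0 < n < q_{t+1}`.

(1) follows from `g_k(n) ≤ (1 + η_k) n / q_k`: the excess of `(1 + η_k) log(2 q_{k+1}) / q_k` over
`log q_{k+1} / q_k` is `O(1/√q_k)`, summable since `q_k ≥ 2^{k/2}`. (2) is termwise
superadditivity, `k(n)` being nondecreasing. For (3), `|λ^n - 1| ≥ 4‖nω‖`. If `i` is the first
index with `‖nω‖ > 1/(8 q_i)` (by best approximation `i ≤ k(n) + 1`), then `n ∈ A_{i-1}`, so
`K(n) - K(n-1) ≥ log 2 + log(2 q_i) ≥ -log(4‖nω‖)`; for `i = 0` the term `log 2` suffices.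
-/

namespace Davie

variable {ω : ℝ}

section ContinuedFraction

variable (hω : Irrational ω)
include hω

theorem irrational_gaussIter (n : ℕ) : Irrational (gaussIter ω n) := by
  induction n with
  | zero => exact hω.sub_intCast ⌊ω⌋
  | succ m ih => exact ih.inv.sub_intCast _

theorem gaussIter_mem_Ioo (n : ℕ) : gaussIter ω n ∈ Set.Ioo (0 : ℝ) 1 := by
  have fract_mem {x : ℝ} (hx : Irrational x) : Int.fract x ∈ Set.Ioo (0 : ℝ) 1 :=
    ⟨(Int.fract_nonneg x).lt_of_ne' (hx.sub_intCast ⌊x⌋).ne_zero, Int.fract_lt_one x⟩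
  cases n with
  | zero => exact fract_mem hω
  | succ m => exact fract_mem (irrational_gaussIter hω m).inv

theorem one_le_cfA_succ (n : ℕ) : 1 ≤ cfA ω (n + 1) :=
  Int.le_floor.2 <| by
    have h := gaussIter_mem_Ioo hω n
    exact_mod_cast ((one_lt_inv₀ h.1).2 h.2).le

theorem cfA_succ_toNat (n : ℕ) : ((cfA ω (n + 1)).toNat : ℤ) = cfA ω (n + 1) :=
  Int.toNat_of_nonneg (zero_le_one.trans (one_le_cfA_succ hω n))

theorem qden_add_two (n : ℕ) :
    (qden ω (n + 2) : ℤ) = cfA ω (n + 2) * qden ω (n + 1) + qden ω n := by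
  rw [qden, Nat.cast_add, Nat.cast_mul, cfA_succ_toNat hω]

theorem qr_add_two (n : ℕ) : qr ω (n + 2) = cfA ω (n + 2) * qr ω (n + 1) + qr ω n := by
  simp only [qr]
  exact_mod_cast qden_add_two hω n

theorem one_le_qden : ∀ n, 1 ≤ qden ω n
  | 0 => le_rfl
  | 1 => by have : 1 ≤ cfA ω 1 := one_le_cfA_succ hω 0; simp only [qden]; omega
  | n + 2 => by
    have := qden_add_two hω n
    have := one_le_cfA_succ hω (n + 1)
    have := one_le_qden n
    have := one_le_qden (n + 1)
    nlinarith

theorem qden_succ_add_qden_le (n : ℕ) : qden ω (n + 1) + qden ω n ≤ qden ω (n + 2) := by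
  have := qden_add_two hω n
  have := one_le_cfA_succ hω (n + 1)
  have := one_le_qden hω (n + 1)
  nlinarith

theorem qden_monotone : Monotone (qden ω) := by
  refine monotone_nat_of_le_succ fun n => ?_
  cases n with
  | zero => exact one_le_qden hω 1
  | succ n => exact le_trans (Nat.le_add_right _ _) (qden_succ_add_qden_le hω n)

theorem two_pow_half_le_qden (n : ℕ) : 2 ^ (n / 2) ≤ qden ω n := by
  induction n using Nat.strong_induction_on with
  | _ n ih =>
    match n with
    | 0 | 1 => exact one_le_qden hω _
    | n + 2 =>
      have := ih n (by omega)
      have := qden_succ_add_qden_le hω n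
      have : qden ω n ≤ qden ω (n + 1) := qden_monotone hω (by omega)
      rw [show (n + 2) / 2 = n / 2 + 1 by omega, pow_succ]
      omega

theorem one_le_qr (n : ℕ) : 1 ≤ qr ω n := by
  simp only [qr]
  exact_mod_cast one_le_qden hω n

theorem qr_le_qr_succ (n : ℕ) : qr ω n ≤ qr ω (n + 1) := by
  simp only [qr]
  exact_mod_cast qden_monotone hω (by omega : n ≤ n + 1)

theorem pnum_mul_qden_sub (n : ℕ) :
    pnum ω (n + 1) * qden ω n - pnum ω n * qden ω (n + 1) = (-1) ^ n := by
  induction n with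
  | zero =>
    simp only [pnum, qden, Nat.cast_one]
    rw [cfA_succ_toNat hω 0]
    ring
  | succ n ih =>
    rw [qden_add_two hω, pnum, pow_succ, ← ih]
    ring

end ContinuedFraction

noncomputable def convergentError (ω : ℝ) (n : ℕ) : ℝ := qr ω n * ω - pnum ω n

noncomputable def gaussProd (ω : ℝ) (n : ℕ) : ℝ := ∏ i ∈ range (n + 1), gaussIter ω i

section BestApproximation

variable (hω : Irrational ω)
include hω

theorem gaussProd_pos (n : ℕ) : 0 < gaussProd ω n :=
  prod_pos fun i _ => (gaussIter_mem_Ioo hω i).1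

theorem gaussProd_succ_le (n : ℕ) : gaussProd ω (n + 1) ≤ gaussProd ω n := by
  rw [gaussProd, prod_range_succ]
  exact mul_le_of_le_one_right (gaussProd_pos hω n).le (gaussIter_mem_Ioo hω (n + 1)).2.le

theorem gaussProd_eq_add (n : ℕ) :
    gaussProd ω n = cfA ω (n + 2) * gaussProd ω (n + 1) + gaussProd ω (n + 2) := by
  have hne : gaussIter ω (n + 1) ≠ 0 := (gaussIter_mem_Ioo hω (n + 1)).1.ne'
  have hiter : gaussIter ω (n + 2) = (gaussIter ω (n + 1))⁻¹ - cfA ω (n + 2) := rfl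
  simp only [gaussProd, prod_range_succ, hiter]
  field_simp
  ring

theorem convergentError_eq (n : ℕ) : convergentError ω n = (-1) ^ n * gaussProd ω n := by
  induction n using Nat.twoStepInduction with
  | zero =>
    have h0 : gaussIter ω 0 = ω - cfA ω 0 := rfl
    simp only [convergentError, gaussProd, zero_add, range_one, prod_singleton, h0, qr, qden,
      pnum, Nat.cast_one, pow_zero]
    ring
  | one =>
    have hne : gaussIter ω 0 ≠ 0 := (gaussIter_mem_Ioo hω 0).1.ne'
    have hq : qr ω 1 = cfA ω 1 := by simp only [qr, qden]; exact_mod_cast cfA_succ_toNat hω 0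
    have h0 : gaussIter ω 0 = ω - cfA ω 0 := rfl
    have h1 : gaussIter ω 1 = (gaussIter ω 0)⁻¹ - cfA ω 1 := rfl
    simp only [convergentError, gaussProd, prod_range_succ, range_one, prod_singleton, hq, pnum,
      h1]
    rw [h0] at hne ⊢
    field_simp
    push_cast
    ring
  | more n ih ih' =>
    simp only [convergentError] at *
    rw [qr_add_two hω, pnum]
    push_cast
    linear_combination (cfA ω (n + 2) : ℝ) * ih' + ih + (-1) ^ n * gaussProd_eq_add hω n

theorem qr_succ_mul_gaussProd_add (n : ℕ) :
    qr ω (n + 1) * gaussProd ω n + qr ω n * gaussProd ω (n + 1) = 1 := by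
  have hdet : (pnum ω (n + 1) : ℝ) * qr ω n - pnum ω n * qr ω (n + 1) = (-1) ^ n := by
    simp only [qr]
    exact_mod_cast pnum_mul_qden_sub hω n
  have h := convergentError_eq hω n
  have h' := convergentError_eq hω (n + 1)
  simp only [convergentError] at h h'
  have hsq : ((-1 : ℝ) ^ n) ^ 2 = 1 := by rw [← pow_mul, mul_comm, pow_mul]; norm_num
  linear_combination -(-1 : ℝ) ^ n * (qr ω (n + 1) * h - qr ω n * h' - hdet) -
    (qr ω (n + 1) * gaussProd ω n + qr ω n * gaussProd ω (n + 1) - 1) * hsq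

theorem one_div_two_mul_qr_succ_le_gaussProd (n : ℕ) : 1 / (2 * qr ω (n + 1)) ≤ gaussProd ω n := by
  have hq := one_le_qr hω (n + 1)
  have := qr_succ_mul_gaussProd_add hω n
  have := qr_le_qr_succ hω n
  have := gaussProd_succ_le hω n
  have := gaussProd_pos hω (n + 1)
  rw [div_le_iff₀ (by positivity)]
  nlinarith

end BestApproximation

theorem le_abs_mul_sub_mul_of_mul_add_mul_eq {a b q q' n : ℤ} (hq : 0 < q) (hn : 0 < n)
    (hnq : n < q') (h : a * q + b * q' = n) {x y : ℝ} (hx : 0 ≤ x) (hy : 0 ≤ y) :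
    x ≤ |a * x - b * y| := by
  rcases le_or_gt b 0 with hb | hb
  · have ha : (1 : ℝ) ≤ a := by exact_mod_cast (show 1 ≤ a by nlinarith)
    have hb' : (b : ℝ) ≤ 0 := by exact_mod_cast hb
    exact le_abs.2 (Or.inl (by nlinarith))
  · have ha : (a : ℝ) ≤ -1 := by exact_mod_cast (show a ≤ -1 by nlinarith)
    have hb' : (0 : ℝ) ≤ b := by exact_mod_cast hb.le
    exact le_abs.2 (Or.inr (by nlinarith))

theorem one_div_two_mul_qr_succ_le_abs_mul_sub (hω : Irrational ω) {t n : ℕ} (m : ℤ) (hn : 1 ≤ n)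
    (hnq : n < qden ω (t + 1)) : 1 / (2 * qr ω (t + 1)) ≤ |n * ω - m| := by
  have hdet := pnum_mul_qden_sub hω t
  have hsq : ((-1 : ℤ) ^ t) ^ 2 = 1 := by rw [← pow_mul, mul_comm, pow_mul]; norm_num
  set s : ℤ := (-1) ^ t
  set a : ℤ := s * (n * pnum ω (t + 1) - m * qden ω (t + 1))
  set b : ℤ := s * (m * qden ω t - n * pnum ω t)
  have hq : a * qden ω t + b * qden ω (t + 1) = n := by linear_combination (s * n) * hdet + n * hsq
  have hp : a * pnum ω t + b * pnum ω (t + 1) = m := by linear_combination (s * m) * hdet + m * hsq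
  have hqR : (a : ℝ) * qr ω t + b * qr ω (t + 1) = n := by simp only [qr]; exact_mod_cast hq
  have hpR : (a : ℝ) * pnum ω t + b * pnum ω (t + 1) = m := by exact_mod_cast hp
  have h := convergentError_eq hω t
  have h' := convergentError_eq hω (t + 1)
  simp only [convergentError] at h h'
  have hsplit : n * ω - m = s * (a * gaussProd ω t - b * gaussProd ω (t + 1)) := by
    push_cast [s]
    linear_combination -ω * hqR + hpR + a * h + b * h'
  have hs : |(s : ℝ)| = 1 := by simp [s]
  rw [hsplit, abs_mul, hs, one_mul]
  refine (one_div_two_mul_qr_succ_le_gaussProd hω t).trans ?_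
  exact le_abs_mul_sub_mul_of_mul_add_mul_eq (by exact_mod_cast one_le_qden hω t)
    (by exact_mod_cast hn) (by exact_mod_cast hnq) hq (gaussProd_pos hω t).le
    (gaussProd_pos hω (t + 1)).le

theorem four_mul_abs_sub_round_le_norm_exp_sub_one (θ : ℝ) :
    4 * |θ - round θ| ≤ ‖Complex.exp (2 * Real.pi * Complex.I * θ) - 1‖ := by
  set y := θ - round θ
  have hexp : Complex.exp (2 * Real.pi * Complex.I * θ) =
      Complex.exp (Complex.I * ↑(2 * Real.pi * y)) := by
    rw [← mul_one (Complex.exp (Complex.I * _)), ← Complex.exp_int_mul_two_pi_mul_I (round θ),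
      ← Complex.exp_add]
    push_cast [y]
    ring_nf
  have hy : |Real.pi * y| ≤ Real.pi / 2 := by
    rw [abs_mul, abs_of_pos Real.pi_pos]
    nlinarith [abs_sub_round θ, Real.pi_pos]
  have hsin := Real.mul_abs_le_abs_sin hy
  rw [hexp, Complex.norm_exp_I_mul_ofReal_sub_one, show 2 * Real.pi * y / 2 = Real.pi * y by ring,
    norm_mul, Real.norm_eq_abs, Real.norm_eq_abs, abs_two, abs_mul Real.pi,
    abs_of_pos Real.pi_pos] at *
  field_simp at hsin
  linarith

theorem four_mul_abs_sub_round_le_norm_exp_pow_sub_one (x : ℝ) (n : ℕ) :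
    4 * |n * x - round (n * x)| ≤ ‖Complex.exp (2 * Real.pi * Complex.I * x) ^ n - 1‖ := by
  rw [← Complex.exp_nat_mul]
  convert four_mul_abs_sub_round_le_norm_exp_sub_one (n * x) using 4
  push_cast
  ring

theorem neg_log_le_log_of_one_le_mul {x y : ℝ} (hx : 0 < x) (hy : 0 < y) (h : 1 ≤ x * y) :
    -Real.log x ≤ Real.log y := by
  have := Real.log_nonneg h
  rw [Real.log_mul hx.ne' hy.ne'] at this
  linarith

theorem sum_range_pow_div_two_le {c : ℝ} (hc0 : 0 ≤ c) (hc1 : c < 1) (N : ℕ) :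
    ∑ k ∈ range N, c ^ (k / 2) ≤ 2 / (1 - c) := by
  have hdouble : ∀ M, ∑ k ∈ range (2 * M), c ^ (k / 2) = 2 * ∑ j ∈ range M, c ^ j := by
    intro M
    induction M with
    | zero => simp
    | succ M ih =>
      rw [show 2 * (M + 1) = 2 * M + 1 + 1 by ring, sum_range_succ, sum_range_succ, ih,
        sum_range_succ, show (2 * M + 1) / 2 = M by omega, show 2 * M / 2 = M by omega]
      ring
  calc ∑ k ∈ range N, c ^ (k / 2) ≤ ∑ k ∈ range (2 * N), c ^ (k / 2) :=
        sum_le_sum_of_subset_of_nonneg (range_subset_range.2 (by omega))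
          fun _ _ _ => pow_nonneg hc0 _
    _ = 2 * ∑ j ∈ Ico 0 N, c ^ j := by rw [hdouble, range_eq_Ico]
    _ ≤ 2 * (c ^ 0 / (1 - c)) := by gcongr; exact geom_sum_Ico_le_of_lt_one hc0 hc1
    _ = 2 / (1 - c) := by ring

theorem sum_range_inv_sqrt_qr_le (hω : Irrational ω) (N : ℕ) :
    ∑ k ∈ range N, 1 / √(qr ω k) ≤ 8 := by
  have hc : (√2)⁻¹ ≤ 3 / 4 := by
    rw [inv_le_comm₀ (by positivity) (by norm_num)]
    exact Real.le_sqrt_of_sq_le (by norm_num)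
  have hterm (k : ℕ) : 1 / √(qr ω k) ≤ (√2)⁻¹ ^ (k / 2) := by
    have hpow : √2 ^ (k / 2) ≤ √(qr ω k) := by
      rw [Real.le_sqrt (by positivity) (zero_le_one.trans (one_le_qr hω k)), ← pow_mul,
        mul_comm, pow_mul, Real.sq_sqrt zero_le_two]
      simp only [qr]
      exact_mod_cast two_pow_half_le_qden hω k
    rw [inv_pow, one_div]
    exact inv_anti₀ (by positivity) hpow
  calc ∑ k ∈ range N, 1 / √(qr ω k) ≤ ∑ k ∈ range N, (√2)⁻¹ ^ (k / 2) :=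
        sum_le_sum fun k _ => hterm k
    _ ≤ 2 / (1 - (√2)⁻¹) := sum_range_pow_div_two_le (by positivity) (by linarith) N
    _ ≤ 8 := by rw [div_le_iff₀ (by linarith)]; linarith

theorem one_add_div_max_mul_log_div_le {Q Q' : ℝ} (hQ : 1 ≤ Q) (hQQ' : Q ≤ Q') :
    (1 + Q / max Q (Q' / 4)) * Real.log (2 * Q') / Q ≤ Real.log Q' / Q + 9 / √Q := by
  have hQ0 : 0 < Q := by linarith
  have hQ'0 : 0 < Q' := by linarith
  have hsQ : √Q ≤ Q := Real.sqrt_le_self_iff.2 (Or.inr hQ)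
  have hsQQ' : √Q ≤ √Q' := Real.sqrt_le_sqrt hQQ'
  have hsQ0 : 0 < √Q := Real.sqrt_pos.2 hQ0
  have hlog2 : Real.log 2 ≤ 1 := (Real.log_le_sub_one_of_pos two_pos).trans (by norm_num)
  have hL : Real.log (2 * Q') = Real.log 2 + Real.log Q' :=
    Real.log_mul two_ne_zero hQ'0.ne'
  -- `log Q' = 2 log √Q' ≤ 2 (√Q' - 1)`
  have hlogQ' : Real.log Q' ≤ 2 * √Q' - 2 := by
    have := Real.log_le_sub_one_of_pos (Real.sqrt_pos.2 hQ'0)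
    rw [Real.log_sqrt hQ'0.le] at this
    linarith
  have hL0 : 0 ≤ Real.log (2 * Q') := Real.log_nonneg (by linarith)
  have hsplit : (1 + Q / max Q (Q' / 4)) * Real.log (2 * Q') / Q =
      Real.log (2 * Q') / Q + Real.log (2 * Q') / max Q (Q' / 4) := by
    field_simp
  have hhead : Real.log (2 * Q') / Q = Real.log 2 / Q + Real.log Q' / Q := by rw [hL, add_div]
  have hlog2_div : Real.log 2 / Q ≤ 1 / √Q :=
    div_le_div₀ zero_le_one hlog2 hsQ0 hsQ
  have htail : Real.log (2 * Q') / max Q (Q' / 4) ≤ 8 / √Q := by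
    calc Real.log (2 * Q') / max Q (Q' / 4) ≤ Real.log (2 * Q') / (Q' / 4) :=
          div_le_div_of_nonneg_left hL0 (by positivity) (le_max_right _ _)
      _ ≤ 8 / √Q' := by
          rw [div_le_div_iff₀ (by positivity) (hsQ0.trans_le hsQQ')]
          nlinarith [Real.sq_sqrt hQ'0.le, Real.sqrt_nonneg Q']
      _ ≤ 8 / √Q := div_le_div_of_nonneg_left (by norm_num) hsQ0 hsQQ'
  rw [hsplit, hhead]
  linarith [show 9 / √Q = 1 / √Q + 8 / √Q by ring]

theorem neg_log_four_mul_le_or_exists_index (hω : Irrational ω) {ε : ℝ} (hε : 0 < ε) {J : ℕ}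
    (hJ : 1 < 8 * ε * qr ω (J + 1)) :
    -Real.log (4 * ε) ≤ Real.log 2 ∨
      ∃ j ≤ J, ε ≤ 1 / (8 * qr ω j) ∧ -Real.log (4 * ε) ≤ Real.log (2 * qr ω (j + 1)) := by
  have hex : ∃ i, 1 < 8 * ε * qr ω i := ⟨_, hJ⟩
  have hlog := neg_log_le_log_of_one_le_mul (by positivity)
    (by linarith [one_le_qr hω (Nat.find hex)] : 0 < 2 * qr ω (Nat.find hex))
    (by linarith [Nat.find_spec hex] : 1 ≤ 4 * ε * (2 * qr ω (Nat.find hex)))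
  rcases h : Nat.find hex with _ | j
  · left
    rwa [h, qr, qden, Nat.cast_one, mul_one] at hlog
  · right
    refine ⟨j, by have := Nat.find_min' hex hJ; omega, ?_, by rwa [h] at hlog⟩
    have := Nat.find_min hex (show j < Nat.find hex by omega)
    have := one_le_qr hω j
    rw [le_div_iff₀ (by positivity)]
    linarith

/-- `kf` is the `k(n)` of Davie's lemma. -/
def IsConvergentIndex (ω : ℝ) (kf : ℕ → ℕ) : Prop :=
  ∀ n, 1 ≤ n → qden ω (kf n) ≤ n ∧ n < qden ω (kf n + 1)

noncomputable def weightedSum (ω : ℝ) (g : ℕ → ℕ → ℝ) (j n : ℕ) : ℝ :=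
  ∑ k ∈ range (j + 1), g k n * Real.log (2 * qr ω (k + 1))

noncomputable def K (ω : ℝ) (g : ℕ → ℕ → ℝ) (kf : ℕ → ℕ) (n : ℕ) : ℝ :=
  n * Real.log 2 + weightedSum ω g (kf n) n

section DavieFunction

variable {g : ℕ → ℕ → ℝ} {kf : ℕ → ℕ}

theorem IsConvergentIndex.mono (hω : Irrational ω) (hkf : IsConvergentIndex ω kf) {m n : ℕ}
    (hm : 1 ≤ m) (hmn : m ≤ n) : kf m ≤ kf n := by
  by_contra! h
  have : qden ω (kf n + 1) ≤ qden ω (kf m) := qden_monotone hω h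
  have := (hkf m hm).1
  have := (hkf n (hm.trans hmn)).2
  omega

theorem log_two_mul_qr_succ_nonneg (hω : Irrational ω) (k : ℕ) :
    0 ≤ Real.log (2 * qr ω (k + 1)) :=
  Real.log_nonneg (by linarith [one_le_qr hω (k + 1)])

theorem weightedSum_zero_right (hgz : ∀ k, g k 0 = 0) (j : ℕ) : weightedSum ω g j 0 = 0 := by
  simp [weightedSum, hgz]

theorem weightedSum_mono_left (hω : Irrational ω) (hg0 : ∀ k n, 0 ≤ g k n) {i j : ℕ} (hij : i ≤ j)
    (n : ℕ) : weightedSum ω g i n ≤ weightedSum ω g j n :=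
  sum_le_sum_of_subset_of_nonneg (range_subset_range.2 (by omega)) fun k _ _ =>
    mul_nonneg (hg0 k n) (log_two_mul_qr_succ_nonneg hω k)

theorem weightedSum_convergentIndex_le (hω : Irrational ω) (hg0 : ∀ k n, 0 ≤ g k n)
    (hgz : ∀ k, g k 0 = 0) (hkf : IsConvergentIndex ω kf) {m n : ℕ} (hmn : m ≤ n) :
    weightedSum ω g (kf m) m ≤ weightedSum ω g (kf n) m := by
  rcases Nat.eq_zero_or_pos m with rfl | hm
  · simp only [weightedSum_zero_right hgz, le_refl]
  · exact weightedSum_mono_left hω hg0 (hkf.mono hω hm hmn) m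

theorem weightedSum_add_le (hω : Irrational ω) (hgsup : ∀ k n₁ n₂, g k n₁ + g k n₂ ≤ g k (n₁ + n₂))
    (j n₁ n₂ : ℕ) : weightedSum ω g j n₁ + weightedSum ω g j n₂ ≤ weightedSum ω g j (n₁ + n₂) := by
  rw [weightedSum, weightedSum, weightedSum, ← sum_add_distrib]
  exact sum_le_sum fun k _ => by
    rw [← add_mul]
    exact mul_le_mul_of_nonneg_right (hgsup k n₁ n₂) (log_two_mul_qr_succ_nonneg hω k)

theorem weightedSum_le_weightedSum_succ (hω : Irrational ω) (hg0 : ∀ k n, 0 ≤ g k n)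
    (hgsup : ∀ k n₁ n₂, g k n₁ + g k n₂ ≤ g k (n₁ + n₂)) (j m : ℕ) :
    weightedSum ω g j m ≤ weightedSum ω g j (m + 1) :=
  (le_add_of_nonneg_right (sum_nonneg fun k _ =>
    mul_nonneg (hg0 k 1) (log_two_mul_qr_succ_nonneg hω k))).trans
    (weightedSum_add_le hω hgsup j m 1)

theorem log_add_weightedSum_le_weightedSum_succ (hω : Irrational ω) (hg0 : ∀ k n, 0 ≤ g k n)
    (hgsup : ∀ k n₁ n₂, g k n₁ + g k n₂ ≤ g k (n₁ + n₂)) {i j : ℕ} (hij : i ≤ j) {m : ℕ}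
    (hi : g i m + 1 ≤ g i (m + 1)) :
    Real.log (2 * qr ω (i + 1)) + weightedSum ω g j m ≤ weightedSum ω g j (m + 1) := by
  have hincr (k : ℕ) : 0 ≤ (g k (m + 1) - g k m) * Real.log (2 * qr ω (k + 1)) :=
    mul_nonneg (by linarith [hgsup k m 1, hg0 k 1]) (log_two_mul_qr_succ_nonneg hω k)
  have hdiff : weightedSum ω g j (m + 1) - weightedSum ω g j m =
      ∑ k ∈ range (j + 1), (g k (m + 1) - g k m) * Real.log (2 * qr ω (k + 1)) := by
    simp only [weightedSum, ← sum_sub_distrib, sub_mul]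
  have hsingle : Real.log (2 * qr ω (i + 1)) ≤
      ∑ k ∈ range (j + 1), (g k (m + 1) - g k m) * Real.log (2 * qr ω (k + 1)) :=
    (le_mul_of_one_le_left (log_two_mul_qr_succ_nonneg hω i) (by linarith)).trans
      (single_le_sum (fun k _ => hincr k) (mem_range.2 (by omega)))
  linarith

theorem weightedSum_le (hω : Irrational ω)
    (hgb : ∀ k n, g k n ≤ (1 + qr ω k / max (qr ω k) (qr ω (k + 1) / 4)) * n / qr ω k)
    (j n : ℕ) :
    weightedSum ω g j n ≤ n * (∑ k ∈ range (j + 1), Real.log (qr ω (k + 1)) / qr ω k + 72) := by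
  have hterm (k : ℕ) : g k n * Real.log (2 * qr ω (k + 1)) ≤
      n * (Real.log (qr ω (k + 1)) / qr ω k + 9 * (1 / √(qr ω k))) := by
    calc g k n * Real.log (2 * qr ω (k + 1))
        ≤ (1 + qr ω k / max (qr ω k) (qr ω (k + 1) / 4)) * n / qr ω k *
            Real.log (2 * qr ω (k + 1)) :=
          mul_le_mul_of_nonneg_right (hgb k n) (log_two_mul_qr_succ_nonneg hω k)
      _ = n * ((1 + qr ω k / max (qr ω k) (qr ω (k + 1) / 4)) *
            Real.log (2 * qr ω (k + 1)) / qr ω k) := by ring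
      _ ≤ n * (Real.log (qr ω (k + 1)) / qr ω k + 9 * (1 / √(qr ω k))) := by
          rw [mul_one_div]
          exact mul_le_mul_of_nonneg_left
            (one_add_div_max_mul_log_div_le (one_le_qr hω k) (qr_le_qr_succ hω k)) n.cast_nonneg
  calc weightedSum ω g j n ≤ ∑ k ∈ range (j + 1),
        n * (Real.log (qr ω (k + 1)) / qr ω k + 9 * (1 / √(qr ω k))) :=
          sum_le_sum fun k _ => hterm k
    _ = n * (∑ k ∈ range (j + 1), Real.log (qr ω (k + 1)) / qr ω k +
          9 * ∑ k ∈ range (j + 1), 1 / √(qr ω k)) := by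
        rw [← mul_sum, sum_add_distrib, mul_sum]
    _ ≤ n * (∑ k ∈ range (j + 1), Real.log (qr ω (k + 1)) / qr ω k + 72) := by
        gcongr
        linarith [sum_range_inv_sqrt_qr_le hω (j + 1)]

theorem K_le (hω : Irrational ω)
    (hgb : ∀ k n, g k n ≤ (1 + qr ω k / max (qr ω k) (qr ω (k + 1) / 4)) * n / qr ω k)
    (n : ℕ) :
    K ω g kf n ≤ n * (∑ k ∈ range (kf n + 1), Real.log (qr ω (k + 1)) / qr ω k + 73) := by
  have hlog2 : Real.log 2 ≤ 1 := (Real.log_le_sub_one_of_pos two_pos).trans (by norm_num)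
  have := weightedSum_le hω hgb (kf n) n
  rw [K]
  nlinarith [n.cast_nonneg (α := ℝ)]

theorem K_add_le (hω : Irrational ω) (hg0 : ∀ k n, 0 ≤ g k n) (hgz : ∀ k, g k 0 = 0)
    (hgsup : ∀ k n₁ n₂, g k n₁ + g k n₂ ≤ g k (n₁ + n₂)) (hkf : IsConvergentIndex ω kf)
    (n₁ n₂ : ℕ) : K ω g kf n₁ + K ω g kf n₂ ≤ K ω g kf (n₁ + n₂) := by
  have h₁ := weightedSum_convergentIndex_le hω hg0 hgz hkf (Nat.le_add_right n₁ n₂)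
  have h₂ := weightedSum_convergentIndex_le hω hg0 hgz hkf (Nat.le_add_left n₂ n₁)
  have := weightedSum_add_le hω hgsup (kf (n₁ + n₂)) n₁ n₂
  simp only [K, Nat.cast_add]
  linarith

theorem neg_log_norm_exp_pow_sub_one_le_K_sub (hω : Irrational ω) (hg0 : ∀ k n, 0 ≤ g k n)
    (hgz : ∀ k, g k 0 = 0) (hgsup : ∀ k n₁ n₂, g k n₁ + g k n₂ ≤ g k (n₁ + n₂))
    (hgA : ∀ k n : ℕ, 1 ≤ n → |(n : ℝ) * ω - round ((n : ℝ) * ω)| ≤ 1 / (8 * qr ω k) →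
      g k (n - 1) + 1 ≤ g k n)
    (hkf : IsConvergentIndex ω kf) {n : ℕ} (hn : 1 ≤ n) :
    -Real.log ‖Complex.exp (2 * Real.pi * Complex.I * ω) ^ n - 1‖ ≤
      K ω g kf n - K ω g kf (n - 1) := by
  obtain ⟨m, rfl⟩ : ∃ m, n = m + 1 := ⟨n - 1, by omega⟩
  rw [Nat.add_sub_cancel]
  set ε := |((m + 1 : ℕ) : ℝ) * ω - round (((m + 1 : ℕ) : ℝ) * ω)|
  have hε : 0 < ε := abs_pos.2 ((hω.natCast_mul m.succ_ne_zero).sub_intCast _).ne_zero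
  have hlog : -Real.log ‖Complex.exp (2 * Real.pi * Complex.I * ω) ^ (m + 1) - 1‖ ≤
      -Real.log (4 * ε) :=
    neg_le_neg (Real.log_le_log (by positivity)
      (four_mul_abs_sub_round_le_norm_exp_pow_sub_one ω (m + 1)))
  have hK : Real.log 2 + (weightedSum ω g (kf (m + 1)) (m + 1) - weightedSum ω g (kf (m + 1)) m) ≤
      K ω g kf (m + 1) - K ω g kf m := by
    have := weightedSum_convergentIndex_le hω hg0 hgz hkf (Nat.le_succ m)
    simp only [K, Nat.cast_succ]
    linarith
  have hS := weightedSum_le_weightedSum_succ hω hg0 hgsup (kf (m + 1)) m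
  have hJ : 1 < 8 * ε * qr ω (kf (m + 1) + 1) := by
    have hbest := one_div_two_mul_qr_succ_le_abs_mul_sub hω (round (((m + 1 : ℕ) : ℝ) * ω))
      (Nat.le_add_left 1 m) (hkf (m + 1) (Nat.le_add_left 1 m)).2
    have hq := one_le_qr hω (kf (m + 1) + 1)
    rw [div_le_iff₀ (by positivity)] at hbest
    nlinarith
  rcases neg_log_four_mul_le_or_exists_index hω hε hJ with h | ⟨j, hjk, hjA, h⟩
  · linarith
  · have hA : g j m + 1 ≤ g j (m + 1) := by
      simpa using hgA j (m + 1) (Nat.le_add_left 1 m) hjA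
    have := log_add_weightedSum_le_weightedSum_succ hω hg0 hgsup hjk hA
    linarith [Real.log_nonneg one_le_two]

end DavieFunction

end Davie

/-- Davie's lemma: there is a universal constant `γ₃ > 0` such that for
every Brjuno number `ω` (with `λ = e^{2πiω}`, convergent denominators `(q_k)`,
`k(n)` defined by `q_{k(n)} ≤ n < q_{k(n)+1}`) and nonnegative functions `g_k`
satisfying Davie's properties, the function
`K(n) = n log 2 + ∑_{k=0}^{k(n)} g_k(n) log(2 q_{k+1})` verifies:
(1) `K(n) ≤ n (∑_{k=0}^{k(n)} log q_{k+1}/q_k + γ₃)`;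
(2) `K(n₁) + K(n₂) ≤ K(n₁+n₂)`;
(3) `-log|λ^n - 1| ≤ K(n) - K(n-1)`. -/
theorem stmt18 :
    ∃ γ₃ > (0 : ℝ), ∀ ω : ℝ, Irrational ω →
      Summable (fun k : ℕ => Real.log (qr ω (k + 1)) / qr ω k) →
      ∀ g : ℕ → ℕ → ℝ,
        (∀ k n : ℕ, 0 ≤ g k n) →
        (∀ k : ℕ, g k 0 = 0) →
        (∀ k n : ℕ, g k n ≤
          (1 + qr ω k / max (qr ω k) (qr ω (k + 1) / 4)) * n / qr ω k) →
        (∀ k n₁ n₂ : ℕ, g k n₁ + g k n₂ ≤ g k (n₁ + n₂)) →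
        (∀ k : ℕ, ∀ n : ℕ, 1 ≤ n →
          |(n : ℝ) * ω - round ((n : ℝ) * ω)| ≤ 1 / (8 * qr ω k) →
          g k (n - 1) + 1 ≤ g k n) →
      ∀ kf : ℕ → ℕ, (∀ n : ℕ, 1 ≤ n → qden ω (kf n) ≤ n ∧ n < qden ω (kf n + 1)) →
      ∀ K : ℕ → ℝ,
        (∀ n : ℕ, K n = n * Real.log 2 +
          ∑ k ∈ Finset.range (kf n + 1), g k n * Real.log (2 * qr ω (k + 1))) →
      (∀ n : ℕ, 1 ≤ n →
        K n ≤ n * ((∑ k ∈ Finset.range (kf n + 1), Real.log (qr ω (k + 1)) / qr ω k) + γ₃)) ∧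
      (∀ n₁ n₂ : ℕ, K n₁ + K n₂ ≤ K (n₁ + n₂)) ∧
      (∀ n : ℕ, 1 ≤ n →
        -Real.log ‖Complex.exp (2 * Real.pi * Complex.I * ω) ^ n - 1‖ ≤ K n - K (n - 1)) := by
  refine ⟨73, by norm_num, fun ω hω _ g hg0 hgz hgb hgsup hgA kf hkf K hK => ?_⟩
  obtain rfl : K = Davie.K ω g kf := funext hK
  exact ⟨fun n _ => Davie.K_le hω hgb n, Davie.K_add_le hω hg0 hgz hgsup hkf,
    fun n hn => Davie.neg_log_norm_exp_pow_sub_one_le_K_sub hω hg0 hgz hgsup hgA hkf hn⟩
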